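/- arXiv:1104.4314 — 6 statements merged into one kernel-verified Lean document; each statement's English description precedes it below -/
import Mathlib

section
/- Let b₀ > 0, q ∈ ℝ, and define p(t) = (1/2)((1 - q²/b₀²) cos(b₀ t) + 2(q/b₀) sin(b₀ t) + 1 + q²/b₀²). Then p(t) ≥ 0 for all t ∈ ℝ, and p(t) = 0 if and only if cos(b₀ t) = (q² - b₀²)/(q² + b₀²) and q·sin(b₀ t) ≤ 0. -/
/-!
With `r = q / b₀` and `θ = b₀ t`, the half-angle formulas turn `p` into the perfect square
`(cos (θ/2) + r sin (θ/2))²`, so `p ≥ 0` and `p` vanishes exactly when `cos (θ/2) = -r sin (θ/2)`.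
Squaring that relation determines `cos θ`, and it forces `r sin θ = -2 r² sin² (θ/2) ≤ 0`;
conversely the value of `cos θ` only gives `cos (θ/2) = ± r sin (θ/2)`, and the sign condition
selects the minus sign.
-/

open Real

theorem half_mul_trig_poly_eq_sq_half_angle (r θ : ℝ) :
    1 / 2 * ((1 - r ^ 2) * cos θ + 2 * r * sin θ + 1 + r ^ 2)
      = (cos (θ / 2) + r * sin (θ / 2)) ^ 2 := by
  have hθ : θ = 2 * (θ / 2) := by ring
  rw [hθ, cos_two_mul, sin_two_mul, ← hθ]
  linear_combination (-r ^ 2) * sin_sq_add_cos_sq (θ / 2)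

theorem cos_half_add_mul_sin_half_eq_zero_iff (r θ : ℝ) :
    cos (θ / 2) + r * sin (θ / 2) = 0 ↔ cos θ = (r ^ 2 - 1) / (r ^ 2 + 1) ∧ r * sin θ ≤ 0 := by
  have hθ : θ = 2 * (θ / 2) := by ring
  rw [hθ, cos_two_mul, sin_two_mul, ← hθ]
  set c := cos (θ / 2)
  set s := sin (θ / 2)
  have hpyth : s ^ 2 + c ^ 2 = 1 := sin_sq_add_cos_sq (θ / 2)
  have hden : r ^ 2 + 1 ≠ 0 := by positivity
  rw [eq_div_iff hden]
  constructor
  · intro h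
    have hc : c = -(r * s) := by linarith
    have hs : s ^ 2 * (r ^ 2 + 1) = 1 := by rw [hc] at hpyth; linear_combination hpyth
    refine ⟨by rw [hc]; linear_combination 2 * r ^ 2 * hs, ?_⟩
    rw [hc]
    nlinarith [sq_nonneg (r * s)]
  · rintro ⟨hcos, hsin⟩
    -- `(c + r s)² (c - r s)² = (c² - r² s²)² = 0`, and `(c + r s)² ≤ (c - r s)²` since `r s c ≤ 0`.
    have hdiff : c ^ 2 - r ^ 2 * s ^ 2 = 0 := by linear_combination hcos / 2 - r ^ 2 * hpyth
    have hprod : (c + r * s) ^ 2 * (c - r * s) ^ 2 = 0 := by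
      linear_combination (c ^ 2 - r ^ 2 * s ^ 2) * hdiff
    have hle : (c + r * s) ^ 2 ≤ (c - r * s) ^ 2 := by nlinarith
    have hsq : (c + r * s) ^ 2 = 0 := by
      rcases mul_eq_zero.mp hprod with h | h
      · exact h
      · exact le_antisymm (h ▸ hle) (sq_nonneg _)
    exact pow_eq_zero_iff two_ne_zero |>.mp hsq

theorem stmt3 (b₀ q : ℝ) (hb : 0 < b₀) :
    ∀ t : ℝ,
      0 ≤ (1 / 2) * ((1 - q ^ 2 / b₀ ^ 2) * Real.cos (b₀ * t)
          + 2 * (q / b₀) * Real.sin (b₀ * t) + 1 + q ^ 2 / b₀ ^ 2) ∧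
      ((1 / 2) * ((1 - q ^ 2 / b₀ ^ 2) * Real.cos (b₀ * t)
          + 2 * (q / b₀) * Real.sin (b₀ * t) + 1 + q ^ 2 / b₀ ^ 2) = 0 ↔
        (Real.cos (b₀ * t) = (q ^ 2 - b₀ ^ 2) / (q ^ 2 + b₀ ^ 2) ∧
          q * Real.sin (b₀ * t) ≤ 0)) := by
  intro t
  have hcos : (q ^ 2 - b₀ ^ 2) / (q ^ 2 + b₀ ^ 2) = ((q / b₀) ^ 2 - 1) / ((q / b₀) ^ 2 + 1) := by
    field_simp
  have hsin : q * sin (b₀ * t) ≤ 0 ↔ q / b₀ * sin (b₀ * t) ≤ 0 := by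
    rw [div_mul_eq_mul_div, div_le_iff₀ hb, zero_mul]
  rw [hcos, hsin, ← div_pow, half_mul_trig_poly_eq_sq_half_angle, sq_eq_zero_iff,
    cos_half_add_mul_sin_half_eq_zero_iff]
  exact ⟨sq_nonneg _, Iff.rfl⟩
end

section
/- Let b₀ > 0, q ∈ ℝ, r > 0, and t with b₀ + b₀ cos(b₀ t) + q sin(b₀ t) > 0 and |b₀ t| < π. Then (2/r)·(arctan(q/r + ((q² + r²)/(b₀ r)) tan(b₀ t / 2)) - arctan(q/r)) = (2/r)·arctan( r sin(b₀ t) / (b₀ + b₀ cos(b₀ t) + q sin(b₀ t)) ). -/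
theorem stmt4 (b₀ q r t : ℝ) (hb : 0 < b₀) (hr : 0 < r)
    (hden : 0 < b₀ + b₀ * Real.cos (b₀ * t) + q * Real.sin (b₀ * t))
    (ht : |b₀ * t| < Real.pi) :
    (2 / r) * (Real.arctan (q / r + ((q ^ 2 + r ^ 2) / (b₀ * r)) * Real.tan (b₀ * t / 2))
        - Real.arctan (q / r)) =
      (2 / r) * Real.arctan (r * Real.sin (b₀ * t) /
        (b₀ + b₀ * Real.cos (b₀ * t) + q * Real.sin (b₀ * t))) := by
  set θ := b₀ * t with hθ
  have hhalf : |θ / 2| < Real.pi / 2 := by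
    rw [abs_div, abs_two]
    linarith [abs_nonneg θ]
  have hcos : 0 < Real.cos (θ / 2) := by
    apply Real.cos_pos_of_mem_Ioo
    constructor <;> [linarith [abs_lt.mp hhalf |>.1]; linarith [abs_lt.mp hhalf |>.2]]
  set u := Real.tan (θ / 2) with hu
  have hsin : Real.sin θ = 2 * Real.sin (θ / 2) * Real.cos (θ / 2) := by
    rw [← Real.sin_two_mul]; ring_nf
  have hcosθ : Real.cos θ = 2 * Real.cos (θ / 2) ^ 2 - 1 := by
    rw [← Real.cos_two_mul]; ring_nf
  have hsinu : Real.sin (θ / 2) = u * Real.cos (θ / 2) := by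
    rw [hu, Real.tan_eq_sin_div_cos]; field_simp
  have hden' : b₀ + b₀ * Real.cos θ + q * Real.sin θ
      = 2 * Real.cos (θ / 2) ^ 2 * (b₀ + q * u) := by
    rw [hsin, hcosθ, hsinu]; ring
  have hbqu : 0 < b₀ + q * u := by
    rw [hden'] at hden
    nlinarith [sq_nonneg (Real.cos (θ / 2))]
  -- RHS argument simplification
  have hrhs : r * Real.sin θ / (b₀ + b₀ * Real.cos θ + q * Real.sin θ)
      = r * u / (b₀ + q * u) := by
    rw [hden', hsin, hsinu]
    field_simp
  -- arctan subtraction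
  set A := q / r + ((q ^ 2 + r ^ 2) / (b₀ * r)) * u with hA
  set B := q / r with hB
  have h1AB : 1 + A * B = (q ^ 2 + r ^ 2) * (b₀ + q * u) / (b₀ * r ^ 2) := by
    rw [hA, hB]; field_simp; ring
  have hABpos : 0 < 1 + A * B := by
    rw [h1AB]
    positivity
  have hmul : A * (-B) < 1 := by nlinarith
  have key : Real.arctan A - Real.arctan B = Real.arctan (r * u / (b₀ + q * u)) := by
    have := Real.arctan_add hmul
    rw [Real.arctan_neg] at this
    have harg : (A + -B) / (1 - A * -B) = r * u / (b₀ + q * u) := by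
      have h2 : 1 - A * -B = (q ^ 2 + r ^ 2) * (b₀ + q * u) / (b₀ * r ^ 2) := by
        rw [← h1AB]; ring
      have hAB' : A + -B = (q ^ 2 + r ^ 2) / (b₀ * r) * u := by rw [hA]; ring
      rw [h2, hAB']
      have hd1 : 0 < (q ^ 2 + r ^ 2) * (b₀ + q * u) := mul_pos (by nlinarith) hbqu
      rw [div_div_eq_mul_div, div_eq_div_iff hd1.ne' hbqu.ne']
      field_simp
    rw [harg] at this
    linarith
  rw [hrhs, ← key]
end

section
/- Let p ≠ 1 be a real number and n ≥ 1. Suppose V : [0,1] → ℝ_{>0} is differentiable and satisfies V'(t) ≤ (√n / 2) V(t)^{(1+p)/2} L'(t) for a nondecreasing differentiable function L with L(0)=0. Then V(1)^{(1-p)/2} - V(0)^{(1-p)/2} ≤ ((1-p)√n / 4) L(1) when p < 1, and V(0)^{(1-p)/2} - V(1)^{(1-p)/2} ≤ ((p-1)√n / 4) L(1) when p > 1. -/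
lemma aux9 (f g f' g' : ℝ → ℝ)
    (hf : ∀ t ∈ Set.Icc (0:ℝ) 1, HasDerivAt f (f' t) t)
    (hg : ∀ t ∈ Set.Icc (0:ℝ) 1, HasDerivAt g (g' t) t)
    (hle : ∀ t ∈ Set.Icc (0:ℝ) 1, f' t ≤ g' t) :
    f 1 - f 0 ≤ g 1 - g 0 := by
  have h01 : (0:ℝ) ∈ Set.Icc (0:ℝ) 1 := by norm_num
  have h11 : (1:ℝ) ∈ Set.Icc (0:ℝ) 1 := by norm_num
  have hh : ∀ t ∈ Set.Icc (0:ℝ) 1, HasDerivAt (fun x => g x - f x) (g' t - f' t) t :=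
    fun t ht => (hg t ht).sub (hf t ht)
  have hmono : MonotoneOn (fun x => g x - f x) (Set.Icc (0:ℝ) 1) := by
    apply monotoneOn_of_deriv_nonneg (convex_Icc 0 1)
    · exact fun t ht => ((hh t ht).continuousAt).continuousWithinAt
    · intro t ht
      rw [interior_Icc] at ht
      exact ((hh t (Set.mem_Icc_of_Ioo ht)).differentiableAt).differentiableWithinAt
    · intro t ht
      rw [interior_Icc] at ht
      rw [(hh t (Set.mem_Icc_of_Ioo ht)).deriv]
      have := hle t (Set.mem_Icc_of_Ioo ht)
      linarith
  have := hmono h01 h11 (by norm_num)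
  simp only at this
  linarith

theorem stmt9 (p : ℝ) (hp : p ≠ 1) (n : ℕ) (hn : 1 ≤ n)
    (V L V' L' : ℝ → ℝ)
    (hVpos : ∀ t ∈ Set.Icc (0:ℝ) 1, 0 < V t)
    (hVd : ∀ t ∈ Set.Icc (0:ℝ) 1, HasDerivAt V (V' t) t)
    (hLd : ∀ t ∈ Set.Icc (0:ℝ) 1, HasDerivAt L (L' t) t)
    (hLmono : ∀ t ∈ Set.Icc (0:ℝ) 1, 0 ≤ L' t)
    (hL0 : L 0 = 0)
    (hineq : ∀ t ∈ Set.Icc (0:ℝ) 1,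
      V' t ≤ (Real.sqrt n / 2) * V t ^ ((1 + p) / 2) * L' t) :
    (p < 1 → V 1 ^ ((1 - p) / 2) - V 0 ^ ((1 - p) / 2) ≤
      ((1 - p) * Real.sqrt n / 4) * L 1) ∧
    (1 < p → V 0 ^ ((1 - p) / 2) - V 1 ^ ((1 - p) / 2) ≤
      ((p - 1) * Real.sqrt n / 4) * L 1) := by
  set c : ℝ := (1 - p) * Real.sqrt n / 4 with hc
  have hWd : ∀ t ∈ Set.Icc (0:ℝ) 1,
      HasDerivAt (fun x => V x ^ ((1 - p) / 2))
        (V' t * ((1 - p) / 2) * V t ^ ((1 - p) / 2 - 1)) t := by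
    intro t ht
    exact (hVd t ht).rpow_const (Or.inl (ne_of_gt (hVpos t ht)))
  have hcLd : ∀ t ∈ Set.Icc (0:ℝ) 1, HasDerivAt (fun x => c * L x) (c * L' t) t :=
    fun t ht => (hLd t ht).const_mul c
  have hcancel : ∀ t ∈ Set.Icc (0:ℝ) 1,
      V t ^ ((1 + p) / 2) * V t ^ ((1 - p) / 2 - 1) = 1 := by
    intro t ht
    rw [← Real.rpow_add (hVpos t ht)]
    have he : (1 + p) / 2 + ((1 - p) / 2 - 1) = 0 := by ring
    rw [he, Real.rpow_zero]
  have hsq : 0 ≤ Real.sqrt n := Real.sqrt_nonneg n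
  constructor
  · intro hplt
    have key : ∀ t ∈ Set.Icc (0:ℝ) 1,
        V' t * ((1 - p) / 2) * V t ^ ((1 - p) / 2 - 1) ≤ c * L' t := by
      intro t ht
      have h1 := hineq t ht
      have h2 := hcancel t ht
      have hk : 0 < V t ^ ((1 - p) / 2 - 1) := Real.rpow_pos_of_pos (hVpos t ht) _
      have h3 : V' t * ((1 - p) / 2 * V t ^ ((1 - p) / 2 - 1)) ≤
          (Real.sqrt n / 2) * V t ^ ((1 + p) / 2) * L' t *
            ((1 - p) / 2 * V t ^ ((1 - p) / 2 - 1)) :=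
        mul_le_mul_of_nonneg_right h1 (mul_nonneg (by linarith) hk.le)
      have h4 : (Real.sqrt n / 2) * V t ^ ((1 + p) / 2) * L' t *
          ((1 - p) / 2 * V t ^ ((1 - p) / 2 - 1)) = c * L' t := by
        rw [hc]; linear_combination ((1 - p) * Real.sqrt n / 4 * L' t) * h2
      rw [mul_assoc]; linarith
    have := aux9 _ _ _ _ hWd hcLd key
    simpa [hL0] using this
  · intro hpgt
    have key : ∀ t ∈ Set.Icc (0:ℝ) 1,
        c * L' t ≤ V' t * ((1 - p) / 2) * V t ^ ((1 - p) / 2 - 1) := by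
      intro t ht
      have h1 := hineq t ht
      have h2 := hcancel t ht
      have hk : 0 < V t ^ ((1 - p) / 2 - 1) := Real.rpow_pos_of_pos (hVpos t ht) _
      have hneg : ((1 - p) / 2 * V t ^ ((1 - p) / 2 - 1)) ≤ 0 := by
        apply mul_nonpos_of_nonpos_of_nonneg <;> nlinarith
      have h3 : (Real.sqrt n / 2) * V t ^ ((1 + p) / 2) * L' t *
            ((1 - p) / 2 * V t ^ ((1 - p) / 2 - 1)) ≤
          V' t * ((1 - p) / 2 * V t ^ ((1 - p) / 2 - 1)) :=
        mul_le_mul_of_nonpos_right h1 hneg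
      have h4 : (Real.sqrt n / 2) * V t ^ ((1 + p) / 2) * L' t *
          ((1 - p) / 2 * V t ^ ((1 - p) / 2 - 1)) = c * L' t := by
        rw [hc]; linear_combination ((1 - p) * Real.sqrt n / 4 * L' t) * h2
      rw [mul_assoc]; linarith
    have := aux9 _ _ _ _ hcLd hWd key
    have hc' : -c = (p - 1) * Real.sqrt n / 4 := by rw [hc]; ring
    rw [← hc']
    simp only [hL0, mul_zero] at this
    linarith
end

section
/- Let φ : ℝ_{>0} → ℝ_{>0} be differentiable and suppose that φ'(V)·(n φ'(V) V + 4 φ(V)) = 0 for all V > 0. Then either φ is constant or φ(V) = c·V^{-4/n} for some constant c > 0. -/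
open Set

/-- A function with vanishing derivative on `Ioi 0` is constant there. -/
lemma aux_const_on_Ioi (f : ℝ → ℝ)
    (hd : ∀ V > (0:ℝ), DifferentiableAt ℝ f V)
    (hz : ∀ V > (0:ℝ), deriv f V = 0) :
    ∀ x > (0:ℝ), ∀ y > (0:ℝ), f x = f y := by
  have key : ∀ x y : ℝ, 0 < x → x < y → f x = f y := by
    intro x y hx hxy
    have hcont : ContinuousOn f (Icc x y) := fun t ht =>
      (hd t (lt_of_lt_of_le hx ht.1)).continuousAt.continuousWithinAt
    have hdiff : DifferentiableOn ℝ f (Ioo x y) := fun t ht =>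
      (hd t (lt_trans hx ht.1)).differentiableWithinAt
    obtain ⟨c, hc, hceq⟩ := exists_deriv_eq_slope f hxy hcont hdiff
    have hc0 : 0 < c := lt_trans hx hc.1
    rw [hz c hc0] at hceq
    have : f y - f x = 0 := by
      have hne : y - x ≠ 0 := sub_ne_zero.2 (ne_of_gt hxy)
      field_simp at hceq
      linarith [hceq]
    linarith
  intro x hx y hy
  rcases lt_trichotomy x y with h | h | h
  · exact key x y hx h
  · rw [h]
  · exact (key y x hy h).symm

theorem stmt14 (n : ℕ) (hn : 1 ≤ n) (φ : ℝ → ℝ)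
    (hpos : ∀ V > (0:ℝ), 0 < φ V)
    (hdiff : ∀ V > (0:ℝ), DifferentiableAt ℝ φ V)
    (hode : ∀ V > (0:ℝ), deriv φ V * ((n : ℝ) * deriv φ V * V + 4 * φ V) = 0) :
    (∃ c : ℝ, 0 < c ∧ ∀ V > (0:ℝ), φ V = c) ∨
    (∃ c : ℝ, 0 < c ∧ ∀ V > (0:ℝ), φ V = c * V ^ (-(4:ℝ) / (n : ℝ))) := by
  have hn0 : (0:ℝ) < n := by exact_mod_cast hn
  -- at each point, nonzero derivative forces the explicit value
  have hne : ∀ V > (0:ℝ), deriv φ V ≠ 0 → deriv φ V = -4 * φ V / ((n:ℝ) * V) := by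
    intro V hV hd
    have h := hode V hV
    rcases mul_eq_zero.1 h with h' | h'
    · exact absurd h' hd
    · have hV' : V ≠ 0 := ne_of_gt hV
      field_simp
      linarith
  by_cases hz : ∀ V > (0:ℝ), deriv φ V = 0
  · left
    refine ⟨φ 1, hpos 1 one_pos, fun V hV => aux_const_on_Ioi φ hdiff hz V hV 1 one_pos⟩
  · right
    push_neg at hz
    obtain ⟨a, ha, hda⟩ := hz
    -- Darboux: the derivative can never vanish on `Ioi 0`
    have key : ∀ V > (0:ℝ), deriv φ V ≠ 0 := by
      intro b hb hdb
      set l := min a b with hl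
      set r := max a b with hr
      have hl0 : 0 < l := lt_min ha hb
      have hlr : l ≤ r := min_le_max
      have hsub : Icc l r ⊆ Ioi (0:ℝ) := fun t ht => lt_of_lt_of_le hl0 ht.1
      have hcont : ContinuousOn φ (Icc l r) := fun t ht =>
        (hdiff t (hsub ht)).continuousAt.continuousWithinAt
      obtain ⟨x0, hx0, hmin⟩ :=
        isCompact_Icc.exists_isMinOn (nonempty_Icc.2 hlr) hcont
      set m := φ x0 with hm
      have hm0 : 0 < m := hpos x0 (hsub hx0)
      have hr0 : 0 < r := lt_of_lt_of_le hl0 hlr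
      set δ := 4 * m / ((n:ℝ) * r) with hδ
      have hδ0 : 0 < δ := by positivity
      -- dichotomy on the interval
      have hdich : ∀ V ∈ Icc l r, deriv φ V = 0 ∨ deriv φ V ≤ -δ := by
        intro V hV
        by_cases hdV : deriv φ V = 0
        · exact Or.inl hdV
        · right
          rw [hne V (hsub hV) hdV]
          have hV0 : 0 < V := hsub hV
          have hφV := hpos V hV0
          have hminV : m ≤ φ V := hmin hV
          have h1 : 4 * m / ((n:ℝ) * r) ≤ 4 * φ V / ((n:ℝ) * V) := by
            apply div_le_div₀ (by linarith) (by linarith) (mul_pos hn0 hV0)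
            exact mul_le_mul_of_nonneg_left hV.2 (le_of_lt hn0)
          rw [hδ]
          have : -(4 * φ V / ((n:ℝ) * V)) ≤ -(4 * m / ((n:ℝ) * r)) := neg_le_neg h1
          calc -4 * φ V / ((n:ℝ) * V) = -(4 * φ V / ((n:ℝ) * V)) := by ring
            _ ≤ -(4 * m / ((n:ℝ) * r)) := this
      have hda' : deriv φ a ≤ -δ := by
        rcases hdich a ⟨min_le_left a b, le_max_left a b⟩ with h | h
        · exact absurd h hda
        · exact h
      have hconn : OrdConnected (deriv φ '' Icc l r) :=
        ordConnected_Icc.image_deriv (fun x hx => hdiff x (hsub hx))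
      have hmem : -δ/2 ∈ deriv φ '' Icc l r := by
        have h1 : deriv φ a ∈ deriv φ '' Icc l r :=
          mem_image_of_mem _ ⟨min_le_left a b, le_max_left a b⟩
        have h2 : deriv φ b ∈ deriv φ '' Icc l r :=
          mem_image_of_mem _ ⟨min_le_right a b, le_max_right a b⟩
        have := hconn.out h1 h2
        apply this
        rw [hdb]
        constructor <;> [linarith; linarith]
      obtain ⟨c, hc, hceq⟩ := hmem
      rcases hdich c hc with h | h <;> rw [hceq] at h <;> linarith
    -- hence the explicit ODE everywhere, and φ V * V^(4/n) is constant
    have hderiv : ∀ V > (0:ℝ), deriv φ V = -4 * φ V / ((n:ℝ) * V) :=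
      fun V hV => hne V hV (key V hV)
    set q : ℝ := (4:ℝ) / n with hq
    set ψ : ℝ → ℝ := fun V => φ V * V ^ q with hψ
    have hψd : ∀ V > (0:ℝ), HasDerivAt ψ 0 V := by
      intro V hV
      have h1 : HasDerivAt φ (deriv φ V) V := (hdiff V hV).hasDerivAt
      have h2 : HasDerivAt (fun x : ℝ => x ^ q) (q * V ^ (q - 1)) V :=
        Real.hasDerivAt_rpow_const (Or.inl (ne_of_gt hV))
      have h3 := h1.mul h2
      have heq : deriv φ V * V ^ q + φ V * (q * V ^ (q - 1)) = 0 := by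
        rw [hderiv V hV, Real.rpow_sub_one (ne_of_gt hV), hq]
        field_simp
        ring
      rw [← heq]
      exact h3
    have hψz : ∀ V > (0:ℝ), deriv ψ V = 0 := fun V hV => (hψd V hV).deriv
    have hψdiff : ∀ V > (0:ℝ), DifferentiableAt ℝ ψ V :=
      fun V hV => (hψd V hV).differentiableAt
    have hψconst := aux_const_on_Ioi ψ hψdiff hψz
    refine ⟨φ 1, hpos 1 one_pos, ?_⟩
    intro V hV
    have h1 : ψ V = ψ 1 := hψconst V hV 1 one_pos
    have hψ1 : ψ 1 = φ 1 := by simp [hψ]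
    have hVq : V ^ q * V ^ (-(4:ℝ)/(n:ℝ)) = 1 := by
      rw [← Real.rpow_add hV]
      have h0 : q + -(4:ℝ)/(n:ℝ) = 0 := by rw [hq]; ring
      rw [h0, Real.rpow_zero]
    have : φ V * V ^ q * V ^ (-(4:ℝ)/(n:ℝ)) = φ 1 * V ^ (-(4:ℝ)/(n:ℝ)) := by
      rw [← hψ1, ← h1]
    calc φ V = φ V * (V ^ q * V ^ (-(4:ℝ)/(n:ℝ))) := by rw [hVq]; ring
      _ = φ 1 * V ^ (-(4:ℝ)/(n:ℝ)) := by rw [← mul_assoc]; exact this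
end

section
/- Let f : ℝ_{>0} → ℝ be twice differentiable and satisfy f'(V) + V·(f'(V))² = 0 for all V > 0. Then either f' ≡ 0, or f(V) = -log V + C for some constant C. -/
/-!
Writing `g = f'`, the equation reads `g (1 + V g) = 0`, so at each point `g V` is `0` or `-1/V`.
Then `(2 f + log)' = 2 g + 1/V` is `±1/V` and never vanishes, so by Darboux's theorem it has a
constant sign on `(0, ∞)`: either `g ≡ 0`, or `g = -1/V` everywhere and `f + log` is constant.
-/

open Real Set

lemma eq_zero_or_mul_eq_neg_one_of_add_mul_sq_eq_zero {x v : ℝ} (h : x + v * x ^ 2 = 0) :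
    x = 0 ∨ v * x = -1 := by
  have hfactor : x * (1 + v * x) = 0 := by linear_combination h
  rcases mul_eq_zero.1 hfactor with hx | hvx
  · exact Or.inl hx
  · exact Or.inr (by linarith)

lemma deriv_eq_zero_or_mul_deriv_eq_neg_one {f : ℝ → ℝ}
    (hdiff : ∀ V > (0:ℝ), DifferentiableAt ℝ f V)
    (hode : ∀ V > (0:ℝ), deriv f V + V * (deriv f V) ^ 2 = 0) :
    (∀ V > (0:ℝ), deriv f V = 0) ∨ (∀ V > (0:ℝ), V * deriv f V = -1) := by
  have hderiv : ∀ V ∈ Ioi (0:ℝ),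
      HasDerivWithinAt (fun V => 2 * f V + log V) (2 * deriv f V + V⁻¹) (Ioi 0) V :=
    fun V hV => (((hdiff V hV).hasDerivAt.const_mul 2).add
      (hasDerivAt_log (ne_of_gt hV))).hasDerivWithinAt
  have hsign : ∀ V > (0:ℝ), (deriv f V = 0 ∧ 0 < 2 * deriv f V + V⁻¹) ∨
      (V * deriv f V = -1 ∧ 2 * deriv f V + V⁻¹ < 0) := by
    intro V hV
    have hVinv : V * V⁻¹ = 1 := mul_inv_cancel₀ hV.ne'
    rcases eq_zero_or_mul_eq_neg_one_of_add_mul_sq_eq_zero (hode V hV) with hg | hg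
    · exact Or.inl ⟨hg, by simp [hg, hV]⟩
    · exact Or.inr ⟨hg, by nlinarith⟩
  have hne : ∀ V ∈ Ioi (0:ℝ), 2 * deriv f V + V⁻¹ ≠ 0 := fun V hV => by
    rcases hsign V hV with ⟨-, h⟩ | ⟨-, h⟩
    exacts [h.ne', h.ne]
  rcases hasDerivWithinAt_forall_lt_or_forall_gt_of_forall_ne (convex_Ioi 0) hderiv hne with
    hneg | hpos
  · exact Or.inr fun V hV => ((hsign V hV).resolve_left fun h => (hneg V hV).not_gt h.2).1
  · exact Or.inl fun V hV => ((hsign V hV).resolve_right fun h => (hpos V hV).not_gt h.2).1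

lemma exists_eq_neg_log_add_of_mul_deriv_eq_neg_one {f : ℝ → ℝ}
    (hdiff : ∀ V > (0:ℝ), DifferentiableAt ℝ f V)
    (hder : ∀ V > (0:ℝ), V * deriv f V = -1) :
    ∃ C : ℝ, ∀ V > (0:ℝ), f V = -log V + C := by
  have hdiffOn : DifferentiableOn ℝ f (Ioi 0) :=
    fun V hV => (hdiff V hV).differentiableWithinAt
  have hlogOn : DifferentiableOn ℝ (fun V => -log V) (Ioi 0) :=
    fun V (hV : 0 < V) => (differentiableAt_log hV.ne').neg.differentiableWithinAt
  have heq : EqOn (deriv f) (deriv fun V => -log V) (Ioi 0) := by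
    intro V (hV : 0 < V)
    have hlog : HasDerivAt (fun V => -log V) (-V⁻¹) V := (hasDerivAt_log hV.ne').neg
    rw [hlog.deriv, eq_neg_iff_add_eq_zero]
    field_simp
    linarith [hder V hV]
  obtain ⟨C, hC⟩ :=
    isOpen_Ioi.exists_eq_add_of_deriv_eq isPreconnected_Ioi hdiffOn hlogOn heq
  exact ⟨C, fun V hV => hC hV⟩

theorem stmt16_general (f : ℝ → ℝ)
    (hdiff : ∀ V > (0:ℝ), DifferentiableAt ℝ f V)
    (hode : ∀ V > (0:ℝ), deriv f V + V * (deriv f V) ^ 2 = 0) :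
    (∀ V > (0:ℝ), deriv f V = 0) ∨
    (∃ C : ℝ, ∀ V > (0:ℝ), f V = -Real.log V + C) :=
  (deriv_eq_zero_or_mul_deriv_eq_neg_one hdiff hode).imp id
    (exists_eq_neg_log_add_of_mul_deriv_eq_neg_one hdiff)

theorem stmt16 (f : ℝ → ℝ)
    (hdiff : ∀ V > (0:ℝ), DifferentiableAt ℝ f V)
    (hdiff2 : ∀ V > (0:ℝ), DifferentiableAt ℝ (deriv f) V)
    (hode : ∀ V > (0:ℝ), deriv f V + V * (deriv f V) ^ 2 = 0) :
    (∀ V > (0:ℝ), deriv f V = 0) ∨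
    (∃ C : ℝ, ∀ V > (0:ℝ), f V = -Real.log V + C) :=
  stmt16_general f hdiff hode
end

section
/- Let b₀ > 0, σ, a₀ ∈ ℝ with n σ² - a₀² = 4b₀², and let φ : I → ℝ, E : I → ℝ_{≥0} be differentiable functions satisfying E' = -φ E and φ' = (n/4)E - (nσ²)/4 - φ²/4 + a₀²/4 on an interval I. Then φ satisfies the third-order relation 4φ'' + 6φφ' + φ³ = φ(a₀² - nσ²). -/
theorem stmt18 (n : ℕ) (hn : 1 ≤ n) (b₀ σ a₀ : ℝ) (hb : 0 < b₀)
    (hrel : (n : ℝ) * σ ^ 2 - a₀ ^ 2 = 4 * b₀ ^ 2)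
    (a b : ℝ) (φ φ' φ'' E : ℝ → ℝ)
    (hE0 : ∀ t ∈ Set.Ioo a b, 0 ≤ E t)
    (hE : ∀ t ∈ Set.Ioo a b, HasDerivAt E (-φ t * E t) t)
    (hφ : ∀ t ∈ Set.Ioo a b, HasDerivAt φ (φ' t) t)
    (hφeq : ∀ t ∈ Set.Ioo a b,
      φ' t = (n : ℝ) / 4 * E t - (n : ℝ) * σ ^ 2 / 4 - φ t ^ 2 / 4 + a₀ ^ 2 / 4)
    (hφ' : ∀ t ∈ Set.Ioo a b, HasDerivAt φ' (φ'' t) t) :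
    ∀ t ∈ Set.Ioo a b,
      4 * φ'' t + 6 * φ t * φ' t + φ t ^ 3 = φ t * (a₀ ^ 2 - (n : ℝ) * σ ^ 2) := by
  intro t ht
  -- the RHS function
  have hf : HasDerivAt (fun s => (n : ℝ) / 4 * E s - (n : ℝ) * σ ^ 2 / 4 - φ s ^ 2 / 4
      + a₀ ^ 2 / 4)
      ((n : ℝ) / 4 * (-φ t * E t) - (2 * φ t * φ' t) / 4) t := by
    have h1 := ((hE t ht).const_mul ((n : ℝ) / 4)).sub_const ((n : ℝ) * σ ^ 2 / 4)
    have h2 := ((hφ t ht).pow 2).div_const 4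
    simpa using (h1.sub h2).add_const (a₀ ^ 2 / 4)
  have heq : φ' =ᶠ[nhds t] (fun s => (n : ℝ) / 4 * E s - (n : ℝ) * σ ^ 2 / 4 - φ s ^ 2 / 4
      + a₀ ^ 2 / 4) := by
    filter_upwards [isOpen_Ioo.mem_nhds ht] with s hs using hφeq s hs
  have h3 : HasDerivAt φ' ((n : ℝ) / 4 * (-φ t * E t) - (2 * φ t * φ' t) / 4) t :=
    hf.congr_of_eventuallyEq heq
  have huniq : φ'' t = (n : ℝ) / 4 * (-φ t * E t) - (2 * φ t * φ' t) / 4 :=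
    (hφ' t ht).unique h3
  have hE' : (n : ℝ) / 4 * E t = φ' t + (n : ℝ) * σ ^ 2 / 4 + φ t ^ 2 / 4 - a₀ ^ 2 / 4 := by
    have := hφeq t ht; linarith
  have : (n : ℝ) / 4 * (-φ t * E t) = -φ t * ((n : ℝ) / 4 * E t) := by ring
  rw [huniq, this, hE']
  ring
end
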